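/- Let λ be an ℓ-partition and t ∈ ℤ^ℓ a multicharge, and suppose (μ; u) lies in the Ŵ_ℓ-orbit of (λ; t), i.e. μ = λ^{σv} and u = t^{σv} for some permutation σ of {1, …, ℓ} and some v ∈ ℤ^ℓ. Then core_e(μ; u) = core_e(λ; t). -/

import Mathlib

/-- A β-set: a subset of ℤ having a maximum element, whose complement has a minimum element. -/
def IsBetaSet (B : Set ℤ) : Prop :=
  (∃ m ∈ B, ∀ x ∈ B, x ≤ m) ∧ (∃ m, m ∉ B ∧ ∀ x, x ∉ B → m ≤ x)

/-- The charge s(B) = |B ∩ ℤ≥0| − |ℤ<0 ∖ B| of a β-set. -/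
noncomputable def charge (B : Set ℤ) : ℤ :=
  ((B ∩ {x : ℤ | 0 ≤ x}).ncard : ℤ) - (({x : ℤ | x < 0} \ B).ncard : ℤ)

/-- B^{+k} = {x + k : x ∈ B}. -/
def shiftSet (B : Set ℤ) (k : ℤ) : Set ℤ := (fun x => x + k) '' B

/-- δ_i(B) for i ∈ ℤ/eℤ. -/
noncomputable def deltaOf (e : ℕ) (i : ZMod e) (B : Set ℤ) : ℤ :=
  ({x : ℤ | x ∈ B ∧ (x : ZMod e) = i ∧ x - 1 ∉ B}.ncard : ℤ)
    - ({x : ℤ | x ∈ B ∧ (x : ZMod e) = i - 1 ∧ x + 1 ∉ B}.ncard : ℤ)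

/-- The i-th component B_i = {a : ae + i ∈ B} of the e-quotient of B. -/
def quotComp (e : ℕ) (B : Set ℤ) (i : ℕ) : Set ℤ :=
  {a : ℤ | a * (e : ℤ) + (i : ℤ) ∈ B}

/-- The e-core of B: ⋃_{i<e} {ae + i : a < s(B_i)}. -/
noncomputable def coreSet (e : ℕ) (B : Set ℤ) : Set ℤ :=
  {x : ℤ | ∃ i < e, ∃ a : ℤ, a < charge (quotComp e B i) ∧ x = a * (e : ℤ) + (i : ℤ)}

/-- The e-weight of B: for each quotient component C = B_i, the a-th term
b_{ia} − s(C) + a equals the number of y ∉ C below the a-th bead b_{ia}, so the inner sum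
counts the pairs (x, y) with x ∈ C, y ∉ C, y < x. -/
noncomputable def wtSet (e : ℕ) (B : Set ℤ) : ℕ :=
  ∑ i ∈ Finset.range e,
    {p : ℤ × ℤ | p.1 ∈ quotComp e B i ∧ p.2 ∉ quotComp e B i ∧ p.2 < p.1}.ncard

/-- υ_j(ae + b) = aeℓ + (ℓ−j)e + b. -/
def upsilon (e ℓ j : ℕ) (x : ℤ) : ℤ :=
  (x - x % (e : ℤ)) * (ℓ : ℤ) + ((ℓ : ℤ) - (j : ℤ)) * (e : ℤ) + x % (e : ℤ)

/-- The Uglov map U(B^{(1)}, …, B^{(ℓ)}) = ⋃_j υ_j(B^{(j)}) (the j-th component of the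
tuple, indexed by Fin ℓ, is B^{(j+1)} of the paper). -/
def uglovU (e ℓ : ℕ) (B : Fin ℓ → Set ℤ) : Set ℤ :=
  ⋃ j : Fin ℓ, upsilon e ℓ (j.1 + 1) '' (B j)

/-- A partition, as a weakly decreasing eventually-zero function ℕ → ℕ
(the value at a being λ_{a+1}). -/
def IsPartitionFun (p : ℕ → ℕ) : Prop :=
  (∀ a b : ℕ, a ≤ b → p b ≤ p a) ∧ ∃ N, ∀ n, N ≤ n → p n = 0

/-- β_t(λ) = {λ_a + t − a : a ≥ 1}. -/
def betaOf (p : ℕ → ℕ) (t : ℤ) : Set ℤ :=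
  {x : ℤ | ∃ a : ℕ, x = (p a : ℤ) + t - ((a : ℤ) + 1)}

-- β⁻¹(B): the unique partition λ with β_{s(B)}(λ) = B (junk value if none exists).
open Classical in
noncomputable def betaInv (B : Set ℤ) : ℕ → ℕ :=
  if h : ∃ p : ℕ → ℕ, IsPartitionFun p ∧ betaOf p (charge B) = B then h.choose
  else fun _ => 0

/-- U(β_t(λ)) for an ℓ-partition λ and multicharge t. -/
def uglovMulti (e ℓ : ℕ) (Λ : Fin ℓ → ℕ → ℕ) (t : Fin ℓ → ℤ) : Set ℤ :=
  uglovU e ℓ (fun j => betaOf (Λ j) (t j))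

/-- U(λ; t) = β⁻¹(U(β_t(λ))). -/
noncomputable def uglovPart (e ℓ : ℕ) (Λ : Fin ℓ → ℕ → ℕ) (t : Fin ℓ → ℤ) : ℕ → ℕ :=
  betaInv (uglovMulti e ℓ Λ t)

/-- core_e(λ; t) = β⁻¹(core_e(U(β_t(λ)))). -/
noncomputable def corePart (e ℓ : ℕ) (Λ : Fin ℓ → ℕ → ℕ) (t : Fin ℓ → ℤ) : ℕ → ℕ :=
  betaInv (coreSet e (uglovMulti e ℓ Λ t))

/-- wt_e(λ; t) = wt_e(U(β_t(λ))). -/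
noncomputable def wtPart (e ℓ : ℕ) (Λ : Fin ℓ → ℕ → ℕ) (t : Fin ℓ → ℤ) : ℕ :=
  wtSet e (uglovMulti e ℓ Λ t)

/-- t ∈ Ā_e^ℓ : t is weakly increasing with last entry at most first entry + e. -/
def memAbar (e : ℕ) {ℓ : ℕ} (t : Fin ℓ → ℤ) : Prop :=
  Monotone t ∧ ∀ i j : Fin ℓ, t j ≤ t i + (e : ℤ)

/-- t ∈ A_e^ℓ : t is weakly increasing with last entry at most first entry + e − 1. -/
def memA (e : ℕ) {ℓ : ℕ} (t : Fin ℓ → ℤ) : Prop :=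
  Monotone t ∧ ∀ i j : Fin ℓ, t j ≤ t i + (e : ℤ) - 1

/-- δ_i^t(λ) = Σ_j δ_i(β_{t_j}(λ^{(j)})). -/
noncomputable def deltaMulti (e ℓ : ℕ) (Λ : Fin ℓ → ℕ → ℕ) (t : Fin ℓ → ℤ) (i : ZMod e) : ℤ :=
  ∑ j : Fin ℓ, deltaOf e i (betaOf (Λ j) (t j))

/-- The Young diagram [λ] of an ℓ-partition, as a set of nodes (a, b, j). -/
def youngSet (ℓ : ℕ) (Λ : Fin ℓ → ℕ → ℕ) : Set (ℕ × ℕ × Fin ℓ) :=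
  {x | 1 ≤ x.1 ∧ 1 ≤ x.2.1 ∧ x.2.1 ≤ Λ x.2.2 (x.1 - 1)}

/-- The multiplicity of i ∈ ℤ/eℤ in the residue multiset res_e^t(λ). -/
noncomputable def resCount (e ℓ : ℕ) (Λ : Fin ℓ → ℕ → ℕ) (t : Fin ℓ → ℤ) (i : ZMod e) : ℕ :=
  {x : ℕ × ℕ × Fin ℓ | x ∈ youngSet ℓ Λ ∧
    (((x.2.1 : ℤ) - (x.1 : ℤ) + t x.2.2 : ℤ) : ZMod e) = i}.ncard

/-- The set of e-weights over the Ŵ_ℓ-orbit of (λ; t). -/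
noncomputable def orbitWeights (e ℓ : ℕ) (Λ : Fin ℓ → ℕ → ℕ) (t : Fin ℓ → ℤ) : Set ℕ :=
  {n : ℕ | ∃ σ : Equiv.Perm (Fin ℓ), ∃ v : Fin ℓ → ℤ,
    n = wtPart e ℓ (fun j => Λ (σ j)) (fun j => t (σ j) + (e : ℤ) * v j)}

/-! The e-core of a β-set depends only on the charges of its e-quotient components. The i-th
quotient component of U(β_t(λ)) interleaves, modulo ℓ, the i-th quotient components of the
β_{t_j}(λ^{(j)}), so its charge is the sum of theirs. Permuting the components does not change
this sum, and replacing t_j by t_j + e·v_j shifts the j-th summand by v_j. Hence every charge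
moves by V = Σ v_j, the core is translated by Ve, and β⁻¹ is unchanged because the translation
moves the charge along with the set. -/

open Set Function

lemma Int.ncard_Ico (a b : ℤ) : (Ico a b).ncard = (b - a).toNat := by
  rw [← Int.card_Ico, ← Set.ncard_coe_finset]; simp

lemma Int.ediv_emod_mul_add {a n j : ℤ} (hj0 : 0 ≤ j) (hjn : j < n) :
    (a * n + j) / n = a ∧ (a * n + j) % n = j :=
  (Int.ediv_emod_unique (by omega)).mpr ⟨by ring, hj0, hjn⟩

lemma exists_Iio_subset_of_bddBelow_compl {B : Set ℤ} (hB : BddBelow Bᶜ) :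
    ∃ M, Iio M ⊆ B := by
  obtain ⟨m, hm⟩ := hB
  exact ⟨m, fun x hx => by_contra fun hxB => (hm hxB).not_gt hx⟩

lemma BddAbove.finite_inter_Ici {B : Set ℤ} (hB : BddAbove B) (M : ℤ) : (B ∩ Ici M).Finite :=
  (bddBelow_Ici.mono inter_subset_right).finite_of_bddAbove (hB.mono inter_subset_left)

lemma charge_eq_ncard_inter_Ici_add {B : Set ℤ} {M : ℤ} (hfin : (B ∩ Ici M).Finite)
    (hM0 : M ≤ 0) (hM : Iio M ⊆ B) : charge B = (B ∩ Ici M).ncard + M := by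
  have hsplit : B ∩ Ici M = (B ∩ Ico M 0) ∪ (B ∩ Ici 0) := by
    rw [← inter_union_distrib_left, Ico_union_Ici_eq_Ici hM0]
  have hneg : Iio 0 \ B = Ico M 0 \ B := by
    ext x
    exact ⟨fun ⟨hx, hxB⟩ => ⟨⟨not_lt.mp fun h => hxB (hM h), hx⟩, hxB⟩,
      fun ⟨hx, hxB⟩ => ⟨hx.2, hxB⟩⟩
  have hIco := ncard_inter_add_ncard_sdiff_eq_ncard (Ico M 0) B (finite_Ico M 0)
  rw [Int.ncard_Ico, inter_comm] at hIco
  have hdisj : Disjoint (B ∩ Ico M 0) (B ∩ Ici 0) :=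
    disjoint_left.mpr fun _ hx hx' => not_le.mpr hx.2.2 hx'.2
  change ((B ∩ Ici 0).ncard : ℤ) - ((Iio 0 \ B).ncard : ℤ) = _
  rw [hsplit, ncard_union_eq hdisj (hfin.subset (hsplit ▸ subset_union_left))
    (hfin.subset (hsplit ▸ subset_union_right)), hneg]
  omega

lemma mem_shiftSet {B : Set ℤ} {k x : ℤ} : x ∈ shiftSet B k ↔ x - k ∈ B :=
  ⟨fun ⟨y, hy, hxy⟩ => by rwa [← hxy, add_sub_cancel_right],
    fun h => ⟨x - k, h, sub_add_cancel x k⟩⟩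

lemma shiftSet_injective (k : ℤ) : Injective (shiftSet · k) :=
  image_injective.2 (add_left_injective k)

lemma charge_shiftSet {B : Set ℤ} (hB : BddAbove B) (hBc : BddBelow Bᶜ) (k : ℤ) :
    charge (shiftSet B k) = charge B + k := by
  obtain ⟨M, hM⟩ := exists_Iio_subset_of_bddBelow_compl hBc
  set N := min M (min 0 (-k)) with hNdef
  have hN : Iio N ⊆ B := (Iio_subset_Iio (min_le_left _ _)).trans hM
  have himage : shiftSet B k ∩ Ici (N + k) = (· + k) '' (B ∩ Ici N) := by
    rw [shiftSet, image_inter (add_left_injective k), image_add_const_Ici]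
  have hfin := hB.finite_inter_Ici N
  rw [charge_eq_ncard_inter_Ici_add hfin (by omega) hN,
    charge_eq_ncard_inter_Ici_add (M := N + k) (himage ▸ hfin.image _) (by omega)
      fun x hx => mem_shiftSet.mpr (hN (by rw [mem_Iio] at hx ⊢; omega)),
    himage, ncard_image_of_injective _ (add_left_injective k)]
  ring

lemma mul_add_ediv_emod_of_fin {n : ℕ} (j : Fin n) (a : ℤ) :
    (a * n + j) / n = a ∧ (a * n + j) % n = j :=
  Int.ediv_emod_mul_add (by positivity) (by exact_mod_cast j.2)

lemma iUnion_image_mul_add_inter_Ici {n : ℕ} (hn : 0 < n) (C : Fin n → Set ℤ) (M : ℤ) :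
    (⋃ j : Fin n, (fun a : ℤ => a * n + j) '' C j) ∩ Ici (M * n) =
      ⋃ j : Fin n, (fun a : ℤ => a * n + j) '' (C j ∩ Ici M) := by
  ext x
  simp only [mem_inter_iff, mem_iUnion, mem_image, mem_Ici,
    ← Int.le_ediv_iff_mul_le (Int.natCast_pos.mpr hn)]
  constructor
  · rintro ⟨⟨j, a, ha, rfl⟩, hM⟩
    exact ⟨j, a, ⟨ha, (mul_add_ediv_emod_of_fin j a).1 ▸ hM⟩, rfl⟩
  · rintro ⟨j, a, ⟨ha, hM⟩, rfl⟩
    exact ⟨⟨j, a, ha, rfl⟩, (mul_add_ediv_emod_of_fin j a).1.symm ▸ hM⟩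

lemma Iio_mul_subset_iUnion_image_mul_add {n : ℕ} (hn : 0 < n) {C : Fin n → Set ℤ} {M : ℤ}
    (hM : ∀ j, Iio M ⊆ C j) : Iio (M * n) ⊆ ⋃ j : Fin n, (fun a : ℤ => a * n + j) '' C j := by
  intro x hx
  have hn' : (0 : ℤ) < n := by exact_mod_cast hn
  have hr0 := Int.emod_nonneg x hn'.ne'
  have hrn := Int.emod_lt_of_pos x hn'
  refine mem_iUnion.mpr ⟨⟨(x % n).toNat, by omega⟩, x / n,
    hM _ ((Int.ediv_lt_iff_lt_mul hn').mpr hx), ?_⟩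
  simp only [Int.toNat_of_nonneg hr0, Int.ediv_mul_add_emod]

lemma pairwise_disjoint_image_mul_add {n : ℕ} (C : Fin n → Set ℤ) :
    Pairwise (Disjoint on fun j : Fin n => (fun a : ℤ => a * n + j) '' C j) := by
  intro j k hjk
  refine disjoint_left.mpr ?_
  rintro x ⟨a, -, rfl⟩ ⟨b, -, hb⟩
  dsimp only at hb
  have := (mul_add_ediv_emod_of_fin k b).2
  rw [hb, (mul_add_ediv_emod_of_fin j a).2] at this
  exact hjk (Fin.ext (by exact_mod_cast this))

lemma charge_iUnion_image_mul_add {n : ℕ} (hn : 0 < n) (C : Fin n → Set ℤ)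
    (hC : ∀ j, BddAbove (C j)) (hCc : ∀ j, BddBelow (C j)ᶜ) :
    charge (⋃ j : Fin n, (fun a : ℤ => a * n + j) '' C j) = ∑ j, charge (C j) := by
  choose m hm using fun j => exists_Iio_subset_of_bddBelow_compl (hCc j)
  obtain ⟨M, hM0, hM⟩ : ∃ M ≤ 0, ∀ j, Iio M ⊆ C j := by
    obtain ⟨M', hM'⟩ := (finite_range m).bddBelow
    exact ⟨min M' 0, min_le_right _ _, fun j =>
      (Iio_subset_Iio ((min_le_left _ _).trans (hM' (mem_range_self j)))).trans (hm j)⟩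
  have hfin : ∀ j : Fin n, ((fun a : ℤ => a * n + j) '' (C j ∩ Ici M)).Finite :=
    fun j => ((hC j).finite_inter_Ici M).image _
  have hinj : ∀ j : Fin n, Injective fun a : ℤ => a * n + j := fun j a b hab => by
    dsimp only at hab
    rw [← (mul_add_ediv_emod_of_fin j a).1, hab, (mul_add_ediv_emod_of_fin j b).1]
  rw [charge_eq_ncard_inter_Ici_add (iUnion_image_mul_add_inter_Ici hn C M ▸ finite_iUnion hfin)
      (mul_nonpos_of_nonpos_of_nonneg hM0 n.cast_nonneg)
      (Iio_mul_subset_iUnion_image_mul_add hn hM),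
    iUnion_image_mul_add_inter_Ici hn,
    ncard_iUnion_of_finite hfin (pairwise_disjoint_image_mul_add _), finsum_eq_sum_of_fintype]
  simp only [ncard_image_of_injective _ (hinj _), Nat.cast_sum,
    charge_eq_ncard_inter_Ici_add ((hC _).finite_inter_Ici M) hM0 (hM _), Finset.sum_add_distrib,
    Finset.sum_const, Finset.card_univ, Fintype.card_fin, nsmul_eq_mul]
  ring

lemma betaOf_add (p : ℕ → ℕ) (t k : ℤ) : betaOf p (t + k) = shiftSet (betaOf p t) k := by
  ext x
  simp only [betaOf, mem_shiftSet, mem_ofPred_eq]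
  exact exists_congr fun a => by constructor <;> intro h <;> linarith

lemma bddAbove_betaOf {p : ℕ → ℕ} (hp : IsPartitionFun p) (t : ℤ) : BddAbove (betaOf p t) :=
  ⟨p 0 + t, by
    rintro x ⟨a, rfl⟩
    have := hp.1 0 a a.zero_le
    omega⟩

lemma bddBelow_compl_betaOf {p : ℕ → ℕ} (hp : IsPartitionFun p) (t : ℤ) :
    BddBelow (betaOf p t)ᶜ := by
  obtain ⟨N, hN⟩ := hp.2
  refine ⟨t - N, fun x hx => not_lt.mp fun hlt => hx ⟨(t - 1 - x).toNat, ?_⟩⟩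
  rw [hN _ (by omega)]
  omega

lemma quotComp_shiftSet (e : ℕ) (B : Set ℤ) (i : ℕ) (v : ℤ) :
    quotComp e (shiftSet B (e * v)) i = shiftSet (quotComp e B i) v := by
  ext a
  simp only [quotComp, mem_shiftSet, mem_ofPred_eq]
  rw [show a * e + i - e * v = (a - v) * e + i by ring]

lemma bddAbove_quotComp {e : ℕ} (he : 0 < e) {B : Set ℤ} (hB : BddAbove B) (i : ℕ) :
    BddAbove (quotComp e B i) := by
  obtain ⟨b, hb⟩ := hB
  refine ⟨max b 0, fun a ha => ?_⟩
  have := hb ha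
  have he' : (1 : ℤ) ≤ e := by exact_mod_cast he
  simp only [le_max_iff]
  by_contra! h
  nlinarith

lemma bddBelow_compl_quotComp {e : ℕ} (he : 0 < e) {B : Set ℤ} (hB : BddBelow Bᶜ) {i : ℕ}
    (hi : i < e) : BddBelow (quotComp e B i)ᶜ := by
  obtain ⟨M, hM⟩ := exists_Iio_subset_of_bddBelow_compl hB
  refine ⟨min M 0, fun a ha => not_lt.mp fun hlt => ha (hM ?_)⟩
  have he' : (1 : ℤ) ≤ e := by exact_mod_cast he
  have hi' : (i : ℤ) < e := by exact_mod_cast hi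
  simp only [lt_min_iff] at hlt
  show a * e + i < M
  nlinarith

lemma upsilon_mul_add {e ℓ : ℕ} (j : Fin ℓ) (a : ℤ) {i : ℤ} (hi0 : 0 ≤ i) (hie : i < e) :
    upsilon e ℓ (j + 1) (a * e + i) = (a * ℓ + j.rev) * e + i := by
  rw [upsilon, (Int.ediv_emod_mul_add hi0 hie).2, Fin.val_rev]
  push_cast [Nat.cast_sub (Nat.succ_le_of_lt j.2)]
  ring

lemma quotComp_uglovU {e ℓ : ℕ} (he : 0 < e) (B : Fin ℓ → Set ℤ) {i : ℕ} (hi : i < e) :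
    quotComp e (uglovU e ℓ B) i =
      ⋃ j : Fin ℓ, (fun a : ℤ => a * ℓ + j) '' quotComp e (B j.rev) i := by
  have hi' : (i : ℤ) < e := by exact_mod_cast hi
  have he' : (0 : ℤ) < e := by exact_mod_cast he
  ext x
  simp only [quotComp, uglovU, mem_ofPred_eq, mem_iUnion, mem_image]
  constructor
  · rintro ⟨j, y, hy, hxy⟩
    have hr0 := Int.emod_nonneg y he'.ne'
    have hre := Int.emod_lt_of_pos y he'
    rw [← Int.ediv_mul_add_emod y e, upsilon_mul_add j _ hr0 hre] at hxy
    obtain ⟨hq, hr⟩ := Int.ediv_emod_mul_add (a := (y / e * ℓ + j.rev)) hr0 hre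
    rw [hxy, (Int.ediv_emod_mul_add (a := x) i.cast_nonneg hi').1] at hq
    rw [hxy, (Int.ediv_emod_mul_add (a := x) i.cast_nonneg hi').2] at hr
    refine ⟨j.rev, y / e, ?_, hq.symm⟩
    rwa [Fin.rev_rev, hr, Int.ediv_mul_add_emod]
  · rintro ⟨j, a, ha, rfl⟩
    exact ⟨j.rev, a * e + i, ha, by rw [upsilon_mul_add _ _ i.cast_nonneg hi', Fin.rev_rev]⟩

lemma charge_quotComp_uglovMulti {e ℓ : ℕ} (he : 0 < e) (hl : 0 < ℓ) {Λ : Fin ℓ → ℕ → ℕ}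
    (hΛ : ∀ j, IsPartitionFun (Λ j)) (t : Fin ℓ → ℤ) {i : ℕ} (hi : i < e) :
    charge (quotComp e (uglovMulti e ℓ Λ t) i) =
      ∑ j, charge (quotComp e (betaOf (Λ j) (t j)) i) := by
  rw [uglovMulti, quotComp_uglovU he _ hi,
    charge_iUnion_image_mul_add hl _ (fun j => bddAbove_quotComp he (bddAbove_betaOf (hΛ _) _) i)
      (fun j => bddBelow_compl_quotComp he (bddBelow_compl_betaOf (hΛ _) _) hi)]
  exact Equiv.sum_comp Fin.revPerm fun j => charge (quotComp e (betaOf (Λ j) (t j)) i)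

lemma charge_quotComp_betaOf_add_mul {e : ℕ} (he : 0 < e) {p : ℕ → ℕ} (hp : IsPartitionFun p)
    (t v : ℤ) {i : ℕ} (hi : i < e) :
    charge (quotComp e (betaOf p (t + e * v)) i) = charge (quotComp e (betaOf p t) i) + v := by
  rw [betaOf_add, quotComp_shiftSet, charge_shiftSet (bddAbove_quotComp he (bddAbove_betaOf hp t) i)
    (bddBelow_compl_quotComp he (bddBelow_compl_betaOf hp t) hi)]

lemma mem_coreSet_iff {e : ℕ} (he : 0 < e) {B : Set ℤ} {x : ℤ} :
    x ∈ coreSet e B ↔ x / e < charge (quotComp e B (x % e).toNat) := by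
  have he' : (0 : ℤ) < e := by exact_mod_cast he
  have hr0 := Int.emod_nonneg x he'.ne'
  constructor
  · rintro ⟨i, hi, a, ha, rfl⟩
    obtain ⟨hq, hr⟩ := Int.ediv_emod_mul_add (a := a) i.cast_nonneg (Int.ofNat_lt.mpr hi)
    rwa [hq, hr, Int.toNat_natCast]
  · intro hx
    refine ⟨(x % e).toNat, by have := Int.emod_lt_of_pos x he'; omega, x / e, hx, ?_⟩
    rw [Int.toNat_of_nonneg hr0, Int.ediv_mul_add_emod]

lemma coreSet_eq_shiftSet {e : ℕ} (he : 0 < e) {B B' : Set ℤ} {V : ℤ}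
    (h : ∀ i < e, charge (quotComp e B' i) = charge (quotComp e B i) + V) :
    coreSet e B' = shiftSet (coreSet e B) (V * e) := by
  have he' : (0 : ℤ) < e := by exact_mod_cast he
  ext x
  have hdiv : (x - V * e) / e = x / e - V := by
    rw [sub_eq_add_neg, ← neg_mul, Int.add_mul_ediv_right _ _ he'.ne']; ring
  have hmod : (x - V * e) % e = x % e := by simp
  rw [mem_shiftSet, mem_coreSet_iff he, mem_coreSet_iff he, hdiv, hmod,
    h _ (by have := Int.emod_lt_of_pos x he'; omega)]
  omega

lemma exists_bounds_charge_quotComp (e : ℕ) (B : Set ℤ) :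
    ∃ c c', ∀ i < e, c ≤ charge (quotComp e B i) ∧ charge (quotComp e B i) ≤ c' := by
  have hfin := (finite_Iio e).image fun i => charge (quotComp e B i)
  obtain ⟨c, hc⟩ := hfin.bddBelow
  obtain ⟨c', hc'⟩ := hfin.bddAbove
  exact ⟨c, c', fun i hi => ⟨hc (mem_image_of_mem _ hi), hc' (mem_image_of_mem _ hi)⟩⟩

lemma bddAbove_coreSet {e : ℕ} (he : 0 < e) (B : Set ℤ) : BddAbove (coreSet e B) := by
  have he' : (0 : ℤ) < e := by exact_mod_cast he
  obtain ⟨_, c', hc'⟩ := exists_bounds_charge_quotComp e B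
  refine ⟨c' * e, fun x hx => ?_⟩
  rw [mem_coreSet_iff he] at hx
  have := (hc' (x % e).toNat (by have := Int.emod_lt_of_pos x he'; omega)).2
  exact ((Int.ediv_lt_iff_lt_mul he').mp (hx.trans_le this)).le

lemma bddBelow_compl_coreSet {e : ℕ} (he : 0 < e) (B : Set ℤ) : BddBelow (coreSet e B)ᶜ := by
  have he' : (0 : ℤ) < e := by exact_mod_cast he
  obtain ⟨c, _, hc⟩ := exists_bounds_charge_quotComp e B
  refine ⟨c * e, fun x hx => ?_⟩
  rw [mem_compl_iff, mem_coreSet_iff he, not_lt] at hx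
  have := (hc (x % e).toNat (by have := Int.emod_lt_of_pos x he'; omega)).1
  exact (Int.le_ediv_iff_mul_le he').mp (this.trans hx)

lemma betaInv_shiftSet {B : Set ℤ} (hB : BddAbove B) (hBc : BddBelow Bᶜ) (k : ℤ) :
    betaInv (shiftSet B k) = betaInv B := by
  have hpred : (fun p => IsPartitionFun p ∧ betaOf p (charge (shiftSet B k)) = shiftSet B k) =
      fun p => IsPartitionFun p ∧ betaOf p (charge B) = B := by
    ext p
    rw [charge_shiftSet hB hBc, betaOf_add, (shiftSet_injective k).eq_iff]
  unfold betaInv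
  rw [hpred]

/-- if (μ; u) lies in the Ŵ_ℓ-orbit of (λ; t), then
core_e(μ; u) = core_e(λ; t). -/
theorem stmt16 (e ℓ : ℕ) (he : 2 ≤ e) (hl : 1 ≤ ℓ) (Λ : Fin ℓ → ℕ → ℕ)
    (hΛ : ∀ j, IsPartitionFun (Λ j)) (t : Fin ℓ → ℤ)
    (μ : Fin ℓ → ℕ → ℕ) (u : Fin ℓ → ℤ)
    (h : ∃ σ : Equiv.Perm (Fin ℓ), ∃ v : Fin ℓ → ℤ,
      μ = (fun j => Λ (σ j)) ∧ u = (fun j => t (σ j) + (e : ℤ) * v j)) :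
    corePart e ℓ μ u = corePart e ℓ Λ t := by
  obtain ⟨σ, v, rfl, rfl⟩ := h
  have he0 : 0 < e := by omega
  have hcharge : ∀ i < e,
      charge (quotComp e (uglovMulti e ℓ (fun j => Λ (σ j)) (fun j => t (σ j) + e * v j)) i) =
        charge (quotComp e (uglovMulti e ℓ Λ t) i) + ∑ j, v j := by
    intro i hi
    rw [charge_quotComp_uglovMulti he0 hl (fun j => hΛ (σ j)) _ hi,
      charge_quotComp_uglovMulti he0 hl hΛ _ hi]
    simp only [charge_quotComp_betaOf_add_mul he0 (hΛ _) _ _ hi, Finset.sum_add_distrib]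
    rw [Equiv.sum_comp σ fun j => charge (quotComp e (betaOf (Λ j) (t j)) i)]
  rw [corePart, corePart, coreSet_eq_shiftSet he0 hcharge,
    betaInv_shiftSet (bddAbove_coreSet he0 _) (bddBelow_compl_coreSet he0 _)]
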